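/- For each integer 0 ≤ i ≤ d and A, B ∈ GL_d(ℚ_p), define δ^i(A,B) = m_{A:0,B:d} + m_{A:d,B:0} − m_{A:i,B:d−i} − m_{A:d−i,B:i}. Then for every n ≥ 1, all A_1, …, A_n, B ∈ GL_d(ℚ_p), and every permutation π of {1,…,n}: Σ_{s=1}^n δ^i(A_s, B) ≥ Σ_{s=1}^n ( m_{A_s:0, A_{π(s)}:d} − m_{A_s:d−i, A_{π(s)}:i} ). -/

import Mathlib

set_option linter.unusedSectionVars false
set_option maxHeartbeats 1000000

section Laplace

variable {K : Type*} [Field K] {d : ℕ}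

def plugIn (T : Finset (Fin d)) {ι : Type} (eqv : ι ≃ {x // x ∈ T})
    (fix : Fin d → Fin d → K) (v : ι → Fin d → K) : Matrix (Fin d) (Fin d) K :=
  Matrix.of fun l => if h : l ∈ T then v (eqv.symm ⟨l, h⟩) else fix l

lemma plugIn_row (T : Finset (Fin d)) {ι : Type} (eqv : ι ≃ {x // x ∈ T})
    (fix : Fin d → Fin d → K) (v : ι → Fin d → K) (l : Fin d) :
    plugIn T eqv fix v l = if h : l ∈ T then v (eqv.symm ⟨l, h⟩) else fix l := rfl

lemma plugIn_update (T : Finset (Fin d)) {ι : Type} [DecidableEq ι] (eqv : ι ≃ {x // x ∈ T})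
    (fix : Fin d → Fin d → K) (v : ι → Fin d → K) (i : ι) (x : Fin d → K) :
    plugIn T eqv fix (Function.update v i x)
      = (plugIn T eqv fix v).updateRow ((eqv i : {x // x ∈ T}) : Fin d) x := by
  ext l j
  by_cases h : l ∈ T
  · by_cases hl : l = ((eqv i : {x // x ∈ T}) : Fin d)
    · subst hl
      simp [plugIn, h, Matrix.updateRow_self]
    · have : eqv.symm ⟨l, h⟩ ≠ i := by
        intro hc
        apply hl
        have := congrArg (fun z => ((eqv z : {x // x ∈ T}) : Fin d)) hc
        simpa using this
      simp [plugIn, h, Matrix.updateRow_ne hl, Function.update_of_ne this]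
  · have hl : l ≠ ((eqv i : {x // x ∈ T}) : Fin d) := by
      intro hc; exact h (hc ▸ (eqv i).2)
    simp [plugIn, h, Matrix.updateRow_ne hl]

def detPlug (T : Finset (Fin d)) {ι : Type} [DecidableEq ι] (eqv : ι ≃ {x // x ∈ T})
    (fix : Fin d → Fin d → K) : MultilinearMap K (fun _ : ι => (Fin d → K)) K where
  toFun v := (plugIn T eqv fix v).det
  map_update_add' v i x y := by
    simp only [plugIn_update, Matrix.det_updateRow_add]
  map_update_smul' v i c x := by
    simp only [plugIn_update, Matrix.det_updateRow_smul, smul_eq_mul]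

@[simp] lemma detPlug_apply (T : Finset (Fin d)) {ι : Type} [DecidableEq ι]
    (eqv : ι ≃ {x // x ∈ T}) (fix : Fin d → Fin d → K) (v : ι → Fin d → K) :
    detPlug T eqv fix v = (plugIn T eqv fix v).det := rfl

noncomputable def rowBasis (B : Matrix (Fin d) (Fin d) K) (hB : B.det ≠ 0) :
    Module.Basis (Fin d) K (Fin d → K) :=
  (Pi.basisFun K (Fin d)).map (Matrix.toLinearEquiv (Pi.basisFun K (Fin d)) B.transpose (by
    simpa [Matrix.det_transpose] using isUnit_iff_ne_zero.2 hB))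

@[simp] lemma rowBasis_apply (B : Matrix (Fin d) (Fin d) K) (hB : B.det ≠ 0) (j : Fin d) :
    rowBasis B hB j = B j := by
  classical
  simp only [rowBasis, Module.Basis.map_apply, Matrix.toLinearEquiv_apply,
    Matrix.toLin_eq_toLin', Matrix.toLin'_apply, Pi.basisFun_apply]
  rw [Matrix.mulVec_single_one]
  simp
  rfl

noncomputable def eqvOf (S J : Finset (Fin d)) (h : J.card = S.card) :
    {x // x ∈ S} ≃ {x // x ∈ J} :=
  ((S.orderIsoOfFin rfl).symm.trans (J.orderIsoOfFin h)).toEquiv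

/-- Generalized Laplace-type expansion: exchanging the rows plugged at `S` with
`S.card`-subsets of the rows of an invertible matrix `B`. -/
lemma det_plugIn_mul_det (B : Matrix (Fin d) (Fin d) K) (hB : B.det ≠ 0)
    (S : Finset (Fin d)) (fix : Fin d → Fin d → K) (v : {x // x ∈ S} → Fin d → K) :
    B.det * (plugIn S (Equiv.refl _) fix v).det =
      ∑ J ∈ (Finset.powersetCard S.card (Finset.univ : Finset (Fin d))).attach,
        (plugIn S (Equiv.refl _) fix
            (fun s => B ((eqvOf S J.1 (Finset.mem_powersetCard.mp J.2).2 s : {x // x ∈ J.1}) : Fin d))).det *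
          (plugIn J.1 (eqvOf S J.1 (Finset.mem_powersetCard.mp J.2).2) (fun l => B l) v).det := by
  classical
  have key : (B.det • detPlug S (Equiv.refl _) fix :
        MultilinearMap K (fun _ : {x // x ∈ S} => (Fin d → K)) K)
      = ∑ J ∈ (Finset.powersetCard S.card (Finset.univ : Finset (Fin d))).attach,
          (plugIn S (Equiv.refl _) fix
              (fun s => B ((eqvOf S J.1 (Finset.mem_powersetCard.mp J.2).2 s : {x // x ∈ J.1}) : Fin d))).det •
            detPlug J.1 (eqvOf S J.1 (Finset.mem_powersetCard.mp J.2).2) (fun l => B l) := by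
    apply Module.Basis.ext_multilinear (fun _ => rowBasis B hB)
    intro t
    simp only [MultilinearMap.smul_apply, MultilinearMap.sum_apply, detPlug_apply,
      rowBasis_apply, smul_eq_mul]
    by_cases hinj : Function.Injective t
    · -- injective case
      set J₀ : Finset (Fin d) := Finset.image t Finset.univ with hJ₀def
      have hJ₀card : J₀.card = S.card := by
        rw [hJ₀def, Finset.card_image_of_injective _ hinj, Finset.card_univ, Fintype.card_coe]
      have hJ₀mem : J₀ ∈ Finset.powersetCard S.card (Finset.univ : Finset (Fin d)) :=
        Finset.mem_powersetCard.mpr ⟨Finset.subset_univ _, hJ₀card⟩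
      rw [Finset.sum_eq_single_of_mem (⟨J₀, hJ₀mem⟩ :
          {x // x ∈ Finset.powersetCard S.card (Finset.univ : Finset (Fin d))})
          (Finset.mem_attach _ _)]
      · -- the surviving term
        set eqv := eqvOf S J₀ hJ₀card with heqv
        have htE : ∀ s : {x // x ∈ S}, t s ∈ J₀ := fun s =>
          Finset.mem_image_of_mem t (Finset.mem_univ s)
        set tE : {x // x ∈ S} ≃ {x // x ∈ J₀} := Equiv.ofBijective
            (fun s => ⟨t s, htE s⟩)
            (by
              constructor
              · intro a b hab
                exact hinj (congrArg Subtype.val hab)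
              · rintro ⟨j, hj⟩
                obtain ⟨s, -, hs⟩ := Finset.mem_image.mp hj
                exact ⟨s, Subtype.ext hs⟩) with htEdef
        have htEval : ∀ s : {x // x ∈ S}, (tE s : Fin d) = t s := fun s => rfl
        set τ₀ : Equiv.Perm {x // x ∈ S} := tE.trans eqv.symm with hτ₀
        set τ : Equiv.Perm (Fin d) := τ₀.extendDomain (Equiv.refl {x // x ∈ S}) with hτ
        set σ : Equiv.Perm (Fin d) := τ₀.extendDomain tE with hσ
        show B.det * (plugIn S (Equiv.refl _) fix fun s => B (t s)).det =
            (plugIn S (Equiv.refl _) fix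
              (fun s => B ((eqvOf S J₀ hJ₀card s : {x // x ∈ J₀}) : Fin d))).det *
            (plugIn J₀ (eqvOf S J₀ hJ₀card) (fun l => B l) (fun s => B (t s))).det
        set eqv := eqvOf S J₀ hJ₀card with heqv
        have hM : plugIn S (Equiv.refl _) fix (fun s => B (t s))
            = (plugIn S (Equiv.refl _) fix
                (fun s => B ((eqv s : {x // x ∈ J₀}) : Fin d))).submatrix τ id := by
          ext l j
          by_cases h : l ∈ S
          · have hτl : τ l = ((τ₀ ⟨l, h⟩ : {x // x ∈ S}) : Fin d) := by
              rw [hτ, Equiv.Perm.extendDomain_apply_subtype _ _ h]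
              rfl
            have hmem : τ l ∈ S := by rw [hτl]; exact (τ₀ ⟨l, h⟩).2
            simp only [Matrix.submatrix_apply, id_eq, plugIn, Matrix.of_apply, dif_pos h,
              dif_pos hmem, Equiv.refl_symm, Equiv.refl_apply]
            have h2 : (⟨τ l, hmem⟩ : {x // x ∈ S}) = τ₀ ⟨l, h⟩ := Subtype.ext hτl
            rw [h2, hτ₀]
            simp only [Equiv.trans_apply, Equiv.apply_symm_apply]
            exact congrFun (congrArg B (congrArg Subtype.val (Equiv.apply_symm_apply eqv (tE ⟨l, h⟩)).symm)) j
          · have hτl : τ l = l := by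
              rw [hτ]; exact Equiv.Perm.extendDomain_apply_not_subtype _ _ h
            simp only [Matrix.submatrix_apply, id_eq, hτl, plugIn, Matrix.of_apply, dif_neg h]
        have hW : plugIn J₀ eqv (fun l => B l) (fun s => B (t s)) = B.submatrix σ id := by
          ext l j
          by_cases h : l ∈ J₀
          · have hσl : σ l = t (eqv.symm ⟨l, h⟩) := by
              rw [hσ, Equiv.Perm.extendDomain_apply_subtype _ _ h, hτ₀]
              simp only [Equiv.trans_apply, Equiv.apply_symm_apply]
              rfl
            simp only [Matrix.submatrix_apply, id_eq, plugIn, Matrix.of_apply, dif_pos h, hσl]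
          · have hσl : σ l = l := by
              rw [hσ]; exact Equiv.Perm.extendDomain_apply_not_subtype _ _ h
            simp only [Matrix.submatrix_apply, id_eq, plugIn, Matrix.of_apply, dif_neg h, hσl]
        have hsign : Equiv.Perm.sign τ = Equiv.Perm.sign σ := by
          rw [hτ, hσ, Equiv.Perm.sign_extendDomain, Equiv.Perm.sign_extendDomain]
        rw [hM, hW, Matrix.det_permute, Matrix.det_permute, hsign]
        ring
      · intro J _ hne
        have hJcard : J.1.card = S.card := (Finset.mem_powersetCard.mp J.2).2
        have hex : ∃ s : {x // x ∈ S}, t s ∉ J.1 := by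
          by_contra hco
          push_neg at hco
          have hsub : J₀ ⊆ J.1 := by
            intro x hx
            obtain ⟨s, -, rfl⟩ := Finset.mem_image.mp hx
            exact hco s
          have hJeq : J₀ = J.1 :=
            Finset.eq_of_subset_of_card_le hsub (by rw [hJcard, hJ₀card])
          exact hne (Subtype.ext hJeq.symm)
        obtain ⟨s0, hs0⟩ := hex
        have h1 : ((eqvOf S J.1 hJcard s0 : {x // x ∈ J.1}) : Fin d) ≠ t s0 :=
          fun hc => hs0 (hc ▸ (eqvOf S J.1 hJcard s0).2)
        have hrow : (plugIn J.1 (eqvOf S J.1 hJcard) (fun l => B l) (fun s => B (t s)))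
              ((eqvOf S J.1 hJcard s0 : {x // x ∈ J.1}) : Fin d)
            = (plugIn J.1 (eqvOf S J.1 hJcard) (fun l => B l) (fun s => B (t s))) (t s0) := by
          have hm : ((eqvOf S J.1 hJcard s0 : {x // x ∈ J.1}) : Fin d) ∈ J.1 :=
            (eqvOf S J.1 hJcard s0).2
          funext j
          simp [plugIn, hm, hs0]
        have hzero := Matrix.det_zero_of_row_eq h1 hrow
        show _ * (plugIn J.1 (eqvOf S J.1 hJcard) (fun l => B l) (fun s => B (t s))).det = 0
        rw [hzero, mul_zero]
    · -- non-injective case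
      obtain ⟨s1, s2, heq, hne⟩ := Function.not_injective_iff.mp hinj
      have hne' : (s1 : Fin d) ≠ (s2 : Fin d) := fun h => hne (Subtype.ext h)
      have hM0 : (plugIn S (Equiv.refl _) fix (fun s => B (t s))).det = 0 := by
        apply Matrix.det_zero_of_row_eq hne'
        funext j
        simp [plugIn, s1.2, s2.2, heq]
      rw [hM0, mul_zero]
      symm
      apply Finset.sum_eq_zero
      intro J _
      have hJcard : J.1.card = S.card := (Finset.mem_powersetCard.mp J.2).2
      have h1 : ((eqvOf S J.1 hJcard s1 : {x // x ∈ J.1}) : Fin d)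
          ≠ ((eqvOf S J.1 hJcard s2 : {x // x ∈ J.1}) : Fin d) := by
        intro hc
        exact hne ((eqvOf S J.1 hJcard).injective (Subtype.ext hc))
      have hrow : (plugIn J.1 (eqvOf S J.1 hJcard) (fun l => B l) (fun s => B (t s)))
            ((eqvOf S J.1 hJcard s1 : {x // x ∈ J.1}) : Fin d)
          = (plugIn J.1 (eqvOf S J.1 hJcard) (fun l => B l) (fun s => B (t s)))
            ((eqvOf S J.1 hJcard s2 : {x // x ∈ J.1}) : Fin d) := by
        have hm1 : ((eqvOf S J.1 hJcard s1 : {x // x ∈ J.1}) : Fin d) ∈ J.1 :=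
          (eqvOf S J.1 hJcard s1).2
        have hm2 : ((eqvOf S J.1 hJcard s2 : {x // x ∈ J.1}) : Fin d) ∈ J.1 :=
          (eqvOf S J.1 hJcard s2).2
        funext j
        simp [plugIn, hm1, hm2, heq]
      rw [Matrix.det_zero_of_row_eq h1 hrow, mul_zero]
  have := DFunLike.congr_fun key v
  simpa only [MultilinearMap.smul_apply, MultilinearMap.sum_apply, detPlug_apply,
    smul_eq_mul] using this

end Laplace


section Exchange
variable {K : Type*} [Field K] {d : ℕ}

lemma exists_exchange (A B : Matrix (Fin d) (Fin d) K) (hA : A.det ≠ 0) (hB : B.det ≠ 0) :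
    ∀ k, k ≤ d → ∃ (S : Finset (Fin d)) (ρ : Fin d → Fin d), S.card = k ∧
      Set.InjOn ρ ↑S ∧ Set.InjOn ρ ↑Sᶜ ∧
      (Matrix.of fun j => if j ∈ S then A (ρ j) else B (ρ j)).det ≠ 0 := by
  classical
  intro k
  induction k with
  | zero =>
    intro _
    refine ⟨∅, id, rfl, by simp, by simp [Set.injOn_id, Function.injective_id], ?_⟩
    have : (Matrix.of fun j => if j ∈ (∅ : Finset (Fin d)) then A (id j) else B (id j)) = B := by
      ext l m; simp
    rw [this]; exact hB
  | succ k ih =>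
    intro hk1
    obtain ⟨S, ρ, hScard, hInjS, hInjSc, hX⟩ := ih (Nat.le_of_succ_le hk1)
    set X : Matrix (Fin d) (Fin d) K :=
      Matrix.of fun j => if j ∈ S then A (ρ j) else B (ρ j) with hXdef
    have hkd : k < d := Nat.lt_of_succ_le hk1
    -- find a good exchange
    have main : ∃ j, j ∉ S ∧ ∃ t, t ∉ S.image ρ ∧ (X.updateRow j (A t)).det ≠ 0 := by
      by_contra hco
      push_neg at hco
      set b := rowBasis X hX with hb
      have hrepr : ∀ t, t ∉ S.image ρ → ∀ j, j ∉ S → b.repr (A t) j = 0 := by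
        intro t ht j hj
        have hAt : A t = ∑ l, b.repr (A t) l • X l := by
          conv_lhs => rw [← b.sum_repr (A t)]
          refine Finset.sum_congr rfl fun l _ => ?_
          rw [rowBasis_apply]
        have hdet : (X.updateRow j (A t)).det = b.repr (A t) j • X.det := by
          conv_lhs => rw [hAt]
          exact Matrix.det_updateRow_sum X j fun l => b.repr (A t) l
        have h0 := hco j hj t ht
        rw [hdet] at h0
        rcases smul_eq_zero.mp h0 with h | h
        · exact h
        · exact absurd h hX
      set U : Submodule K (Fin d → K) :=
        Submodule.span K ((S.image fun l => X l : Finset (Fin d → K)) : Set (Fin d → K)) with hU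
      have hmemU : ∀ t, A t ∈ U := by
        intro t
        by_cases ht : t ∈ S.image ρ
        · obtain ⟨j₀, hj₀, hρ⟩ := Finset.mem_image.mp ht
          have hX0 : X j₀ = A t := by
            show (if j₀ ∈ S then A (ρ j₀) else B (ρ j₀)) = A t
            rw [if_pos hj₀, hρ]
          rw [← hX0]
          exact Submodule.subset_span (Finset.mem_coe.mpr
            (Finset.mem_image_of_mem _ hj₀))
        · have hAt : A t = ∑ l, b.repr (A t) l • X l := by
            conv_lhs => rw [← b.sum_repr (A t)]
            exact Finset.sum_congr rfl fun l _ => by rw [rowBasis_apply]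
          rw [hAt]
          refine Submodule.sum_mem _ fun l _ => ?_
          by_cases hl : l ∈ S
          · exact Submodule.smul_mem _ _ (Submodule.subset_span
              (Finset.mem_coe.mpr (Finset.mem_image_of_mem _ hl)))
          · rw [hrepr t ht l hl, zero_smul]
            exact Submodule.zero_mem _
      have htop : Submodule.span K (Set.range A) = ⊤ := by
        change Submodule.span K (Set.range A.row) = ⊤
        rw [← range_vecMulLinear, LinearMap.range_eq_top]
        exact Matrix.vecMul_surjective_iff_isUnit.2
          ((Matrix.isUnit_iff_isUnit_det A).2 (isUnit_iff_ne_zero.2 hA))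
      have hle : (⊤ : Submodule K (Fin d → K)) ≤ U := by
        rw [← htop]
        exact Submodule.span_le.mpr (Set.range_subset_iff.mpr hmemU)
      have h1 : Module.finrank K (Fin d → K) ≤ Module.finrank K U := by
        rw [← finrank_top K (Fin d → K)]
        exact Submodule.finrank_mono hle
      have h2 : Module.finrank K U ≤ k := by
        refine le_trans (finrank_span_finset_le_card _) ?_
        exact le_trans (Finset.card_image_le) hScard.le
      rw [Module.finrank_pi, Fintype.card_fin] at h1
      omega
    obtain ⟨j, hj, t, ht, hdet⟩ := main
    refine ⟨insert j S, Function.update ρ j t, ?_, ?_, ?_, ?_⟩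
    · rw [Finset.card_insert_of_notMem hj, hScard]
    · intro x hx y hy hxy
      simp only [Finset.coe_insert, Set.mem_insert_iff, Finset.mem_coe] at hx hy
      rcases hx with rfl | hx <;> rcases hy with rfl | hy
      · rfl
      · exfalso
        have hyj : y ≠ x := by rintro rfl; exact hj hy
        rw [Function.update_self, Function.update_of_ne hyj] at hxy
        exact ht (Finset.mem_image.mpr ⟨y, hy, hxy.symm⟩)
      · exfalso
        have hxj : x ≠ y := by rintro rfl; exact hj hx
        rw [Function.update_self, Function.update_of_ne hxj] at hxy
        exact ht (Finset.mem_image.mpr ⟨x, hx, hxy⟩)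
      · have hxj : x ≠ j := by rintro rfl; exact hj hx
        have hyj : y ≠ j := by rintro rfl; exact hj hy
        rw [Function.update_of_ne hxj, Function.update_of_ne hyj] at hxy
        exact hInjS hx hy hxy
    · intro x hx y hy hxy
      simp only [Finset.coe_compl, Set.mem_compl_iff, Finset.mem_coe,
        Finset.mem_insert, not_or] at hx hy
      rw [Function.update_of_ne hx.1, Function.update_of_ne hy.1] at hxy
      exact hInjSc (by simpa using hx.2) (by simpa using hy.2) hxy
    · have heq : (Matrix.of fun j' => if j' ∈ insert j S then A (Function.update ρ j t j')
          else B (Function.update ρ j t j')) = X.updateRow j (A t) := by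
        ext l m
        by_cases hl : l = j
        · subst hl
          simp [Function.update_self, Matrix.updateRow_self]
        · simp only [Matrix.updateRow_ne hl, Matrix.of_apply, Function.update_of_ne hl,
            Finset.mem_insert, hXdef]
          by_cases hlS : l ∈ S <;> simp [hlS, hl]
      rw [heq]
      exact hdet
end Exchange



open Pointwise

namespace BT

variable (p : ℕ) [Fact p.Prime] (d : ℕ)

/-- A `ℤ_[p]`-lattice in `ℚ_[p]^d`: a finitely generated `ℤ_[p]`-submodule that
spans `ℚ_[p]^d` over `ℚ_[p]`. -/
def IsLattice (L : Submodule ℤ_[p] (Fin d → ℚ_[p])) : Prop :=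
  L.FG ∧ Submodule.span ℚ_[p] (L : Set (Fin d → ℚ_[p])) = ⊤

/-- Two submodules are homothetic if one is a nonzero scalar multiple of the other. -/
def Homothetic (L L' : Submodule ℤ_[p] (Fin d → ℚ_[p])) : Prop :=
  ∃ c : ℚ_[p], c ≠ 0 ∧ (L' : Set (Fin d → ℚ_[p])) = c • (L : Set (Fin d → ℚ_[p]))

theorem homothetic_equivalence : Equivalence (Homothetic p d) where
  refl := fun L => ⟨1, one_ne_zero, (one_smul ℚ_[p] (L : Set (Fin d → ℚ_[p]))).symm⟩
  symm := by
    rintro L L' ⟨c, hc, h⟩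
    exact ⟨c⁻¹, inv_ne_zero hc, by rw [h, inv_smul_smul₀ hc]⟩
  trans := by
    rintro L L' L'' ⟨c, hc, h⟩ ⟨c', hc', h'⟩
    exact ⟨c' * c, mul_ne_zero hc' hc, by rw [h', h, smul_smul]⟩

def BTSetoid : Setoid (Submodule ℤ_[p] (Fin d → ℚ_[p])) :=
  ⟨Homothetic p d, homothetic_equivalence p d⟩

/-- Vertices of the Bruhat–Tits building: homothety classes of submodules
(the building proper consists of the classes of lattices). -/
def Vertex := Quotient (BTSetoid p d)

/-- `A_v`: the homothety class of the `ℤ_[p]`-span of the rows of `A`. -/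
noncomputable def vertexOf (A : Matrix (Fin d) (Fin d) ℚ_[p]) : Vertex p d :=
  Quotient.mk (BTSetoid p d) (Submodule.span ℤ_[p] (Set.range fun i => A i))

/-- One half of the adjacency relation: there are lattice representatives
`L ⊋ L' ⊋ pL`. -/
def AdjHalf (x y : Vertex p d) : Prop :=
  ∃ L L' : Submodule ℤ_[p] (Fin d → ℚ_[p]),
    IsLattice p d L ∧ IsLattice p d L' ∧
    x = Quotient.mk (BTSetoid p d) L ∧ y = Quotient.mk (BTSetoid p d) L' ∧
    (L' : Set (Fin d → ℚ_[p])) ⊂ (L : Set (Fin d → ℚ_[p])) ∧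
    (p : ℚ_[p]) • (L : Set (Fin d → ℚ_[p])) ⊂ (L' : Set (Fin d → ℚ_[p]))

/-- The 1-skeleton of the Bruhat–Tits building of `SL_d(ℚ_p)` as a simple graph. -/
def Graph : SimpleGraph (Vertex p d) where
  Adj x y := x ≠ y ∧ (AdjHalf p d x y ∨ AdjHalf p d y x)
  symm := ⟨fun x y h => ⟨h.1.symm, h.2.symm⟩⟩
  loopless := ⟨fun x h => h.1 rfl⟩

/-- An `(A:i, B:d−i)`-candidate: a matrix whose rows are `i` pairwise distinct rows
of `A` and `d − i` pairwise distinct rows of `B`. -/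
def IsCandidate (i : ℕ) (A B X : Matrix (Fin d) (Fin d) ℚ_[p]) : Prop :=
  ∃ (S : Finset (Fin d)) (ρ : Fin d → Fin d),
    S.card = i ∧ Set.InjOn ρ ↑S ∧ Set.InjOn ρ ↑Sᶜ ∧
    ∀ j, X j = if j ∈ S then A (ρ j) else B (ρ j)

/-- `m_{A:i,B:d−i}`: the minimal valuation of the determinant of an
`(A:i, B:d−i)`-candidate with nonzero determinant. -/
noncomputable def mVal (i : ℕ) (A B : Matrix (Fin d) (Fin d) ℚ_[p]) : ℤ :=
  sInf {v : ℤ | ∃ X : Matrix (Fin d) (Fin d) ℚ_[p],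
    IsCandidate p d i A B X ∧ X.det ≠ 0 ∧ v = X.det.valuation}

/-- Membership in `GL_d(ℤ_p)` (as a matrix over `ℚ_p`): integral entries and
determinant a unit of `ℤ_p`. -/
def InGLZp (X : Matrix (Fin d) (Fin d) ℚ_[p]) : Prop :=
  (∀ i j, ‖X i j‖ ≤ 1) ∧ ‖X.det‖ = 1



lemma mVal_def (i : ℕ) (A B : Matrix (Fin d) (Fin d) ℚ_[p]) :
    mVal p d i A B = sInf {v : ℤ | ∃ X : Matrix (Fin d) (Fin d) ℚ_[p],
      IsCandidate p d i A B X ∧ X.det ≠ 0 ∧ v = X.det.valuation} := rfl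

lemma valSet_finite (i : ℕ) (A B : Matrix (Fin d) (Fin d) ℚ_[p]) :
    {v : ℤ | ∃ X : Matrix (Fin d) (Fin d) ℚ_[p],
      IsCandidate p d i A B X ∧ X.det ≠ 0 ∧ v = X.det.valuation}.Finite := by
  classical
  apply Set.Finite.subset (Set.finite_range (fun P : Finset (Fin d) × (Fin d → Fin d) =>
    Padic.valuation (Matrix.of fun j => if j ∈ P.1 then A (P.2 j) else B (P.2 j)).det))
  rintro v ⟨X, ⟨S, ρ, -, -, -, h4⟩, -, rfl⟩
  refine ⟨(S, ρ), ?_⟩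
  have hX : (Matrix.of fun j => if j ∈ S then A (ρ j) else B (ρ j)) = X :=
    (funext h4).symm
  show (Matrix.of fun j => if j ∈ S then A (ρ j) else B (ρ j)).det.valuation = X.det.valuation
  rw [hX]

lemma mVal_le {i : ℕ} {A B X : Matrix (Fin d) (Fin d) ℚ_[p]}
    (hc : IsCandidate p d i A B X) (hdet : X.det ≠ 0) :
    mVal p d i A B ≤ X.det.valuation :=
  csInf_le (valSet_finite p d i A B).bddBelow ⟨X, hc, hdet, rfl⟩

lemma exists_candidate {i : ℕ} (hi : i ≤ d) {A B : Matrix (Fin d) (Fin d) ℚ_[p]}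
    (hA : A.det ≠ 0) (hB : B.det ≠ 0) :
    ∃ X, IsCandidate p d i A B X ∧ X.det ≠ 0 := by
  obtain ⟨S, ρ, h1, h2, h3, h4⟩ := exists_exchange A B hA hB i hi
  exact ⟨Matrix.of fun j => if j ∈ S then A (ρ j) else B (ρ j),
    ⟨S, ρ, h1, h2, h3, fun j => rfl⟩, h4⟩

lemma mVal_attained {i : ℕ} (hi : i ≤ d) {A B : Matrix (Fin d) (Fin d) ℚ_[p]}
    (hA : A.det ≠ 0) (hB : B.det ≠ 0) :
    ∃ X, IsCandidate p d i A B X ∧ X.det ≠ 0 ∧ mVal p d i A B = X.det.valuation := by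
  obtain ⟨X, hc, hdet⟩ := exists_candidate p d hi hA hB
  have hne : {v : ℤ | ∃ X : Matrix (Fin d) (Fin d) ℚ_[p],
      IsCandidate p d i A B X ∧ X.det ≠ 0 ∧ v = X.det.valuation}.Nonempty :=
    ⟨X.det.valuation, X, hc, hdet, rfl⟩
  obtain ⟨X', hc', hdet', hv⟩ := Set.Nonempty.csInf_mem hne (valSet_finite p d i A B)
  exact ⟨X', hc', hdet', hv⟩

lemma isCandidate_compl {i : ℕ} {A B X : Matrix (Fin d) (Fin d) ℚ_[p]}
    (h : IsCandidate p d i A B X) : IsCandidate p d (d - i) B A X := by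
  classical
  obtain ⟨S, ρ, h1, h2, h3, h4⟩ := h
  refine ⟨Sᶜ, ρ, ?_, h3, by rwa [compl_compl], fun j => ?_⟩
  · rw [Finset.card_compl, Fintype.card_fin, h1]
  · rw [h4 j]
    by_cases hj : j ∈ S <;> simp [hj]

lemma mVal_symm {i : ℕ} (hi : i ≤ d) (A B : Matrix (Fin d) (Fin d) ℚ_[p]) :
    mVal p d i A B = mVal p d (d - i) B A := by
  rw [mVal_def, mVal_def]
  congr 1
  ext v
  constructor
  · rintro ⟨X, hc, hdet, rfl⟩
    exact ⟨X, isCandidate_compl p d hc, hdet, rfl⟩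
  · rintro ⟨X, hc, hdet, rfl⟩
    refine ⟨X, ?_, hdet, rfl⟩
    have := isCandidate_compl p d hc
    rwa [Nat.sub_sub_self hi] at this

lemma padic_valuation_neg {x : ℚ_[p]} (hx : x ≠ 0) : (-x).valuation = x.valuation := by
  have hm1 : (-1 : ℚ_[p]) ≠ 0 := by norm_num
  have hv1 : (-1 : ℚ_[p]).valuation = 0 := by
    have h := Padic.valuation_mul (p := p) hm1 hm1
    rw [show (-1 : ℚ_[p]) * -1 = 1 by ring, Padic.valuation_one] at h
    omega
  rw [show -x = (-1 : ℚ_[p]) * x by ring, Padic.valuation_mul hm1 hx, hv1, zero_add]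

lemma mVal_zero {A B : Matrix (Fin d) (Fin d) ℚ_[p]} (hB : B.det ≠ 0) :
    mVal p d 0 A B = B.det.valuation := by
  classical
  rw [mVal_def]
  have hset : {v : ℤ | ∃ X : Matrix (Fin d) (Fin d) ℚ_[p],
      IsCandidate p d 0 A B X ∧ X.det ≠ 0 ∧ v = X.det.valuation} = {B.det.valuation} := by
    ext v
    simp only [Set.mem_setOf_eq, Set.mem_singleton_iff]
    constructor
    · rintro ⟨X, ⟨S, ρ, h1, h2, h3, h4⟩, hdet, rfl⟩
      have hS : S = ∅ := Finset.card_eq_zero.mp h1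
      subst hS
      have hinj : Function.Injective ρ := by
        have : Set.InjOn ρ Set.univ := by
          have h : ((∅ᶜ : Finset (Fin d)) : Set (Fin d)) = Set.univ := by
            simp
          rwa [h] at h3
        exact Set.injOn_univ.mp this
      have hbij : Function.Bijective ρ := Finite.injective_iff_bijective.mp hinj
      set σ : Equiv.Perm (Fin d) := Equiv.ofBijective ρ hbij with hσ
      have hXeq : X = B.submatrix σ id := by
        ext l m
        rw [h4 l]
        simp [Matrix.submatrix_apply, hσ, Equiv.ofBijective_apply]
      rw [hXeq, Matrix.det_permute]
      rcases Int.units_eq_one_or (Equiv.Perm.sign σ) with h | h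
      · rw [h]; simp
      · rw [h]
        simp only [Units.val_neg, Units.val_one, Int.cast_neg, Int.cast_one, neg_one_mul]
        exact padic_valuation_neg p hB
    · rintro rfl
      refine ⟨B, ⟨∅, id, rfl, by simp, ?_, fun j => by simp⟩, hB, rfl⟩
      have : ((∅ᶜ : Finset (Fin d)) : Set (Fin d)) = Set.univ := by simp
      rw [this]
      exact Function.injective_id.injOn
  rw [hset, csInf_singleton]

lemma mVal_top {A B : Matrix (Fin d) (Fin d) ℚ_[p]} (hA : A.det ≠ 0) :
    mVal p d d A B = A.det.valuation := by
  rw [mVal_symm p d (le_refl d), Nat.sub_self, mVal_zero p d hA]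

lemma le_valuation_sum {ι : Type*} (m : ℤ) :
    ∀ (s : Finset ι) (g : ι → ℚ_[p]), (∑ j ∈ s, g j) ≠ 0 →
      (∀ j ∈ s, g j ≠ 0 → m ≤ (g j).valuation) → m ≤ (∑ j ∈ s, g j).valuation := by
  classical
  intro s
  induction s using Finset.induction_on with
  | empty => intro g hne _; simp at hne
  | @insert a s' ha ih =>
    intro g hne hb
    rw [Finset.sum_insert ha] at hne ⊢
    by_cases h1 : g a = 0
    · rw [h1, zero_add] at hne ⊢
      exact ih g hne fun j hj => hb j (Finset.mem_insert_of_mem hj)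
    · by_cases h2 : (∑ j ∈ s', g j) = 0
      · rw [h2, add_zero] at hne ⊢
        exact hb a (Finset.mem_insert_self a s') h1
      · refine le_trans (le_min (hb a (Finset.mem_insert_self a s') h1)
          (ih g h2 fun j hj => hb j (Finset.mem_insert_of_mem hj))) ?_
        exact Padic.le_valuation_add hne

/-- Triangle-type inequality for the `m`-invariants. -/
lemma mVal_triangle {k : ℕ} (hk : k ≤ d) {A B C : Matrix (Fin d) (Fin d) ℚ_[p]}
    (hA : A.det ≠ 0) (hB : B.det ≠ 0) (hC : C.det ≠ 0) :
    mVal p d k A B + mVal p d k B C ≤ mVal p d k A C + B.det.valuation := by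
  classical
  obtain ⟨X, ⟨S, ρ, hScard, hIS, hISc, hXrows⟩, hXdet, hXval⟩ :=
    mVal_attained p d hk hA hC
  -- express X via plugIn
  have hXplug : X = plugIn S (Equiv.refl _) (fun l => C (ρ l)) (fun s => A (ρ (s : Fin d))) := by
    funext l
    rw [hXrows l, plugIn_row]
    by_cases h : l ∈ S <;> simp [h]
  have hkey := det_plugIn_mul_det B hB S (fun l => C (ρ l)) (fun s => A (ρ (s : Fin d)))
  rw [← hXplug] at hkey
  -- each summand is a product of candidate determinants
  have hterm : ∀ J : {x // x ∈ Finset.powersetCard S.card (Finset.univ : Finset (Fin d))},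
      (fun J : {x // x ∈ Finset.powersetCard S.card (Finset.univ : Finset (Fin d))} =>
        (plugIn S (Equiv.refl _) (fun l => C (ρ l))
            (fun s => B ((eqvOf S J.1 (Finset.mem_powersetCard.mp J.2).2 s :
              {x // x ∈ J.1}) : Fin d))).det *
          (plugIn J.1 (eqvOf S J.1 (Finset.mem_powersetCard.mp J.2).2) (fun l => B l)
            (fun s => A (ρ (s : Fin d)))).det) J ≠ 0 →
      mVal p d k B C + mVal p d k A B ≤
        ((fun J : {x // x ∈ Finset.powersetCard S.card (Finset.univ : Finset (Fin d))} =>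
        (plugIn S (Equiv.refl _) (fun l => C (ρ l))
            (fun s => B ((eqvOf S J.1 (Finset.mem_powersetCard.mp J.2).2 s :
              {x // x ∈ J.1}) : Fin d))).det *
          (plugIn J.1 (eqvOf S J.1 (Finset.mem_powersetCard.mp J.2).2) (fun l => B l)
            (fun s => A (ρ (s : Fin d)))).det) J).valuation := by
    intro J hJne
    set hJcard := (Finset.mem_powersetCard.mp J.2).2 with hJcarddef
    set eqv := eqvOf S J.1 hJcard with heqvdef
    obtain ⟨hZne, hWne⟩ : (plugIn S (Equiv.refl _) (fun l => C (ρ l))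
          (fun s => B ((eqv s : {x // x ∈ J.1}) : Fin d))).det ≠ 0 ∧
        (plugIn J.1 eqv (fun l => B l) (fun s => A (ρ (s : Fin d)))).det ≠ 0 := by
      constructor <;> intro h <;> apply hJne <;> simp only [h, zero_mul, mul_zero, ← heqvdef]
    -- Z is a (B:k, C:d-k) candidate
    have hZcand : IsCandidate p d k B C
        (plugIn S (Equiv.refl _) (fun l => C (ρ l))
          (fun s => B ((eqv s : {x // x ∈ J.1}) : Fin d))) := by
      refine ⟨S, fun l => if h : l ∈ S then ((eqv ⟨l, h⟩ : {x // x ∈ J.1}) : Fin d) else ρ l,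
        hScard, ?_, ?_, fun j => ?_⟩
      · intro x hx y hy hxy
        simp only [Finset.mem_coe] at hx hy
        dsimp only at hxy
        rw [dif_pos hx, dif_pos hy] at hxy
        have := eqv.injective (Subtype.ext hxy)
        exact congrArg Subtype.val this
      · intro x hx y hy hxy
        simp only [Finset.coe_compl, Set.mem_compl_iff, Finset.mem_coe] at hx hy
        dsimp only at hxy
        rw [dif_neg hx, dif_neg hy] at hxy
        exact hISc (by simpa using hx) (by simpa using hy) hxy
      · rw [plugIn_row]
        by_cases h : j ∈ S <;> simp [h]
    -- W is an (A:k, B:d-k) candidate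
    have hWcand : IsCandidate p d k A B
        (plugIn J.1 eqv (fun l => B l) (fun s => A (ρ (s : Fin d)))) := by
      refine ⟨J.1, fun l => if h : l ∈ J.1 then ρ ((eqv.symm ⟨l, h⟩ : {x // x ∈ S}) : Fin d)
        else l, by rw [hJcard, hScard], ?_, ?_, fun j => ?_⟩
      · intro x hx y hy hxy
        simp only [Finset.mem_coe] at hx hy
        dsimp only at hxy
        rw [dif_pos hx, dif_pos hy] at hxy
        have h1 := hIS (Finset.mem_coe.mpr (eqv.symm ⟨x, hx⟩).2)
          (Finset.mem_coe.mpr (eqv.symm ⟨y, hy⟩).2) hxy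
        have h2 := eqv.symm.injective (Subtype.ext h1)
        exact congrArg Subtype.val h2
      · intro x hx y hy hxy
        simp only [Finset.coe_compl, Set.mem_compl_iff, Finset.mem_coe] at hx hy
        dsimp only at hxy
        rwa [dif_neg hx, dif_neg hy] at hxy
      · rw [plugIn_row]
        by_cases h : j ∈ J.1 <;> simp [h]
    have hval : ((plugIn S (Equiv.refl _) (fun l => C (ρ l))
          (fun s => B ((eqv s : {x // x ∈ J.1}) : Fin d))).det *
        (plugIn J.1 eqv (fun l => B l) (fun s => A (ρ (s : Fin d)))).det).valuation
        = (plugIn S (Equiv.refl _) (fun l => C (ρ l))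
            (fun s => B ((eqv s : {x // x ∈ J.1}) : Fin d))).det.valuation +
          (plugIn J.1 eqv (fun l => B l) (fun s => A (ρ (s : Fin d)))).det.valuation :=
      Padic.valuation_mul hZne hWne
    calc mVal p d k B C + mVal p d k A B
        ≤ _ + _ := add_le_add (mVal_le p d hZcand hZne) (mVal_le p d hWcand hWne)
      _ = _ := hval.symm
  have hne : (∑ J ∈ (Finset.powersetCard S.card (Finset.univ : Finset (Fin d))).attach,
      (plugIn S (Equiv.refl _) (fun l => C (ρ l))
          (fun s => B ((eqvOf S J.1 (Finset.mem_powersetCard.mp J.2).2 s :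
            {x // x ∈ J.1}) : Fin d))).det *
        (plugIn J.1 (eqvOf S J.1 (Finset.mem_powersetCard.mp J.2).2) (fun l => B l)
          (fun s => A (ρ (s : Fin d)))).det) ≠ 0 := by
    rw [← hkey]
    exact mul_ne_zero hB hXdet
  have hfinal := le_valuation_sum p _ _ _ hne (fun J _ hJ => hterm J hJ)
  rw [← hkey, Padic.valuation_mul hB hXdet, ← hXval] at hfinal
  omega


/-- **General lower bound.** With
`δ^i(A,B) = m_{A:0,B:d} + m_{A:d,B:0} − m_{A:i,B:d−i} − m_{A:d−i,B:i}`,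
for any `A_1, …, A_n, B ∈ GL_d(ℚ_p)` and any permutation `π` of `{1,…,n}`:
`Σ_s δ^i(A_s, B) ≥ Σ_s (m_{A_s:0, A_{π(s)}:d} − m_{A_s:d−i, A_{π(s)}:i})`. -/
theorem general_lower_bound (hd : 2 ≤ d) (i : ℕ) (hi : i ≤ d) (n : ℕ) (hn : 1 ≤ n)
    (A : Fin n → Matrix (Fin d) (Fin d) ℚ_[p]) (hA : ∀ s, (A s).det ≠ 0)
    (B : Matrix (Fin d) (Fin d) ℚ_[p]) (hB : B.det ≠ 0)
    (π : Equiv.Perm (Fin n)) :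
    ∑ s : Fin n, (mVal p d 0 (A s) (A (π s)) - mVal p d (d - i) (A s) (A (π s))) ≤
      ∑ s : Fin n,
        (mVal p d 0 (A s) B + mVal p d d (A s) B -
          mVal p d i (A s) B - mVal p d (d - i) (A s) B) := by
  have hkd : d - i ≤ d := Nat.sub_le d i
  have hper : ∀ s : Fin n,
      mVal p d 0 (A s) (A (π s)) - mVal p d (d - i) (A s) (A (π s)) ≤
        ((A (π s)).det.valuation - mVal p d i (A (π s)) B) +
        (B.det.valuation - mVal p d (d - i) (A s) B) := by
    intro s
    have tri := mVal_triangle p d hkd (hA s) hB (hA (π s))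
    have hsym : mVal p d (d - i) B (A (π s)) = mVal p d i (A (π s)) B :=
      (mVal_symm p d hi (A (π s)) B).symm
    rw [mVal_zero p d (hA (π s))]
    rw [hsym] at tri
    linarith
  calc ∑ s : Fin n, (mVal p d 0 (A s) (A (π s)) - mVal p d (d - i) (A s) (A (π s)))
      ≤ ∑ s : Fin n, (((A (π s)).det.valuation - mVal p d i (A (π s)) B) +
          (B.det.valuation - mVal p d (d - i) (A s) B)) :=
        Finset.sum_le_sum (fun s _ => hper s)
    _ = ∑ s : Fin n, ((A s).det.valuation - mVal p d i (A s) B) +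
        ∑ s : Fin n, (B.det.valuation - mVal p d (d - i) (A s) B) := by
        rw [Finset.sum_add_distrib]
        congr 1
        exact Equiv.sum_comp π (fun u => (A u).det.valuation - mVal p d i (A u) B)
    _ = ∑ s : Fin n, (mVal p d 0 (A s) B + mVal p d d (A s) B -
          mVal p d i (A s) B - mVal p d (d - i) (A s) B) := by
        rw [← Finset.sum_add_distrib]
        refine Finset.sum_congr rfl fun s _ => ?_
        rw [mVal_zero p d hB, mVal_top p d (hA s)]
        ring

end BT
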